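/- Let X be a nonnegative random variable on a probability space (Ω, 𝓕, P), let ν be a measure on a measurable space S and f : S → [0,∞) measurable, and suppose that for every λ > 0 one has ∫_S (1 − exp(−λ f(s))) ν(ds) < ∞ and E[exp(−λX)] = exp(−∫_S (1 − exp(−λ f(s))) ν(ds)). Then P(X = 0) = 0 if and only if ν({s ∈ S : f(s) > 0}) = ∞. -/

import Mathlib

/-! As `λ → ∞`, `E[exp (-λ X)] → P(X = 0)` by dominated convergence, while
`∫ (1 - exp (-λ f)) dν ↑ ν {f > 0}` by monotone convergence. Reading the Lévy–Khintchine identity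
in `ℝ≥0∞` through `a ↦ exp (-a)`, which is continuous on `[0, ∞]` and vanishes only at `∞`, the
limit gives `P(X = 0) = exp (-ν {f > 0})`. -/

open MeasureTheory Filter Topology Real

theorem tendsto_exp_neg_mul_atTop_nhds_zero {x : ℝ} (hx : 0 < x) :
    Tendsto (fun t : ℝ => exp (-t * x)) atTop (𝓝 0) :=
  tendsto_exp_atBot.comp (tendsto_neg_atTop_atBot.atBot_mul_const hx)

theorem tendsto_exp_neg_mul_atTop {x : ℝ} (hx : 0 ≤ x) :
    Tendsto (fun t : ℝ => exp (-t * x)) atTop (𝓝 (({0} : Set ℝ).indicator (1 : ℝ → ℝ) x)) := by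
  rcases hx.eq_or_lt with rfl | hx
  · simp
  · simpa [hx.ne'] using tendsto_exp_neg_mul_atTop_nhds_zero hx

theorem ofReal_one_sub_exp_neg_mul_of_nonpos {t x : ℝ} (ht : 0 ≤ t) (hx : x ≤ 0) :
    ENNReal.ofReal (1 - exp (-t * x)) = 0 :=
  ENNReal.ofReal_of_nonpos <| sub_nonpos.2 <| one_le_exp <|
    mul_nonneg_of_nonpos_of_nonpos (neg_nonpos.2 ht) hx

theorem monotone_ofReal_one_sub_exp_neg_mul (x : ℝ) :
    Monotone (fun n : ℕ => ENNReal.ofReal (1 - exp (-n * x))) := by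
  intro m n hmn
  rcases le_or_gt x 0 with hx | hx
  · simp only [ofReal_one_sub_exp_neg_mul_of_nonpos (Nat.cast_nonneg _) hx, le_refl]
  · dsimp only
    gcongr

theorem tendsto_ofReal_one_sub_exp_neg_mul (x : ℝ) :
    Tendsto (fun n : ℕ => ENNReal.ofReal (1 - exp (-n * x))) atTop
      (𝓝 ((Set.Ioi 0).indicator 1 x)) := by
  rcases le_or_gt x 0 with hx | hx
  · simp only [ofReal_one_sub_exp_neg_mul_of_nonpos (Nat.cast_nonneg _) hx,
      Set.indicator_of_notMem (show x ∉ Set.Ioi 0 from hx.not_gt)]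
    exact tendsto_const_nhds
  · have := ((tendsto_exp_neg_mul_atTop_nhds_zero hx).comp tendsto_natCast_atTop_atTop).const_sub 1
    simpa [hx] using ENNReal.tendsto_ofReal this

theorem tendsto_integral_exp_neg_mul_atTop {Ω : Type*} [MeasurableSpace Ω] (P : Measure Ω)
    [IsFiniteMeasure P] {X : Ω → ℝ} (hX : Measurable X) (hX0 : ∀ᵐ ω ∂P, 0 ≤ X ω) :
    Tendsto (fun t : ℝ => ∫ ω, exp (-t * X ω) ∂P) atTop (𝓝 (P.real {ω | X ω = 0})) := by
  rw [← integral_indicator_one (measurableSet_eq_fun hX measurable_const)]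
  refine tendsto_integral_filter_of_dominated_convergence (fun _ => 1)
    (Eventually.of_forall fun t => (hX.const_mul _).exp.aestronglyMeasurable) ?_
    (integrable_const 1) (hX0.mono fun ω hω => ?_)
  · filter_upwards [eventually_ge_atTop 0] with t ht
    filter_upwards [hX0] with ω hω
    rw [Real.norm_of_nonneg (exp_nonneg _), exp_le_one_iff]
    exact mul_nonpos_of_nonpos_of_nonneg (neg_nonpos.2 ht) hω
  · simpa [Set.indicator_apply] using tendsto_exp_neg_mul_atTop hω

theorem tendsto_lintegral_ofReal_one_sub_exp_neg_mul {S : Type*} [MeasurableSpace S]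
    (ν : Measure S) {f : S → ℝ} (hf : Measurable f) :
    Tendsto (fun n : ℕ => ∫⁻ s, ENNReal.ofReal (1 - exp (-n * f s)) ∂ν) atTop
      (𝓝 (ν {s | 0 < f s})) := by
  rw [← lintegral_indicator_one (measurableSet_lt measurable_const hf)]
  exact lintegral_tendsto_of_tendsto_of_monotone
    (fun n => (measurable_const.sub (hf.const_mul _).exp).ennreal_ofReal.aemeasurable)
    (ae_of_all _ fun s => monotone_ofReal_one_sub_exp_neg_mul (f s))
    (ae_of_all _ fun s => tendsto_ofReal_one_sub_exp_neg_mul (f s))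

theorem EReal.exp_neg_coe_ennreal_of_ne_top {a : ENNReal} (ha : a ≠ ⊤) :
    EReal.exp (-(a : EReal)) = ENNReal.ofReal (Real.exp (-a.toReal)) := by
  rw [← EReal.coe_ennreal_toReal ha, ← EReal.coe_neg, EReal.exp_coe]

theorem measure_setOf_eq_zero_eq_exp_neg
    {Ω S : Type*} [MeasurableSpace Ω] [MeasurableSpace S]
    (P : Measure Ω) [IsFiniteMeasure P]
    (X : Ω → ℝ) (hX : Measurable X) (hX0 : ∀ᵐ ω ∂P, 0 ≤ X ω)
    (ν : Measure S) (f : S → ℝ) (hf : Measurable f)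
    (hfin : ∀ lam : ℝ, 0 < lam →
      (∫⁻ s, ENNReal.ofReal (1 - exp (-lam * f s)) ∂ν) < ⊤)
    (hLK : ∀ lam : ℝ, 0 < lam →
      ∫ ω, exp (-lam * X ω) ∂P =
        exp (-(∫⁻ s, ENNReal.ofReal (1 - exp (-lam * f s)) ∂ν).toReal)) :
    P {ω | X ω = 0} = EReal.exp (-(ν {s | 0 < f s} : EReal)) := by
  have hP := ENNReal.tendsto_ofReal
    ((tendsto_integral_exp_neg_mul_atTop P hX hX0).comp tendsto_natCast_atTop_atTop)
  rw [ofReal_measureReal] at hP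
  have hν := (EReal.expHomeomorph.continuous.comp
    (continuous_neg.comp continuous_coe_ennreal_ereal)).tendsto _ |>.comp
    (tendsto_lintegral_ofReal_one_sub_exp_neg_mul ν hf)
  refine tendsto_nhds_unique hP (hν.congr' ?_)
  filter_upwards [eventually_gt_atTop 0] with n hn
  have hlam : (0 : ℝ) < n := Nat.cast_pos.2 hn
  simp only [Function.comp_apply, EReal.expHomeomorph_apply, hLK n hlam,
    EReal.exp_neg_coe_ennreal_of_ne_top (hfin n hlam).ne]

theorem prob_eq_zero_iff_levy_measure_infinite_general
    {Ω S : Type*} [MeasurableSpace Ω] [MeasurableSpace S]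
    (P : Measure Ω) [IsProbabilityMeasure P]
    (X : Ω → ℝ) (hX : Measurable X) (hX0 : ∀ᵐ ω ∂P, 0 ≤ X ω)
    (ν : Measure S) (f : S → ℝ) (hf : Measurable f)
    (hfin : ∀ lam : ℝ, 0 < lam →
      (∫⁻ s, ENNReal.ofReal (1 - Real.exp (-lam * f s)) ∂ν) < ⊤)
    (hLK : ∀ lam : ℝ, 0 < lam →
      ∫ ω, Real.exp (-lam * X ω) ∂P =
        Real.exp (-(∫⁻ s, ENNReal.ofReal (1 - Real.exp (-lam * f s)) ∂ν).toReal)) :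
    P {ω | X ω = 0} = 0 ↔ ν {s | 0 < f s} = ⊤ := by
  rw [measure_setOf_eq_zero_eq_exp_neg P X hX hX0 ν f hf hfin hLK, EReal.exp_eq_zero_iff,
    EReal.neg_eq_bot_iff, EReal.coe_ennreal_eq_top_iff]

/-- Let `X` be a nonnegative random variable on a probability space `(Ω, 𝓕, P)`, let `ν` be a
measure on a measurable space `S` and `f : S → [0,∞)` measurable, and suppose that for every
`λ > 0` one has `∫_S (1 − exp(−λ f s)) ν(ds) < ∞` and
`E[exp(−λX)] = exp(−∫_S (1 − exp(−λ f s)) ν(ds))`. Then `P(X = 0) = 0` if and only if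
`ν {s | f s > 0} = ∞`. -/
theorem prob_eq_zero_iff_levy_measure_infinite
    {Ω S : Type*} [MeasurableSpace Ω] [MeasurableSpace S]
    (P : Measure Ω) [IsProbabilityMeasure P]
    (X : Ω → ℝ) (hX : Measurable X) (hX0 : ∀ᵐ ω ∂P, 0 ≤ X ω)
    (ν : Measure S) (f : S → ℝ) (hf : Measurable f) (hf0 : ∀ s, 0 ≤ f s)
    (hfin : ∀ lam : ℝ, 0 < lam →
      (∫⁻ s, ENNReal.ofReal (1 - Real.exp (-lam * f s)) ∂ν) < ⊤)
    (hLK : ∀ lam : ℝ, 0 < lam →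
      ∫ ω, Real.exp (-lam * X ω) ∂P =
        Real.exp (-(∫⁻ s, ENNReal.ofReal (1 - Real.exp (-lam * f s)) ∂ν).toReal)) :
    P {ω | X ω = 0} = 0 ↔ ν {s | 0 < f s} = ⊤ :=
  prob_eq_zero_iff_levy_measure_infinite_general P X hX hX0 ν f hf hfin hLK
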